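/- In the Framed ALOHA model with P ≥ 1 slots and k ≥ 1 transmitters, the joint probability mass function of the number of successful slots and collided slots satisfies the recursion P(S_k = s, C_k = c) = ((P − s + 1 − c)/P)·P(S_{k−1} = s − 1, C_{k−1} = c) + (c/P)·P(S_{k−1} = s, C_{k−1} = c) + ((s + 1)/P)·P(S_{k−1} = s + 1, C_{k−1} = c − 1) for all integers s, c ≥ 0, where S_{k−1}, C_{k−1} are the corresponding counts for an experiment with k − 1 transmitters and P slots, and any term in which a count index is negative is taken to be 0. Moreover the initial condition P(S_0 = 0, C_0 = 0) = 1 holds. -/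
import Mathlib


/-- Framed ALOHA model: an outcome `ω : Fin k → Fin P` assigns to each of the `k`
transmitters a slot among `P` slots, chosen independently and uniformly at random.
`numSuccess P k ω` is the number of slots chosen by exactly one transmitter. -/
def numSuccess (P k : ℕ) (ω : Fin k → Fin P) : ℕ :=
  (Finset.univ.filter (fun p : Fin P =>
    (Finset.univ.filter (fun i : Fin k => ω i = p)).card = 1)).card

/-- `numCollision P k ω` is the number of slots chosen by at least two transmitters. -/
def numCollision (P k : ℕ) (ω : Fin k → Fin P) : ℕ :=
  (Finset.univ.filter (fun p : Fin P =>
    2 ≤ (Finset.univ.filter (fun i : Fin k => ω i = p)).card)).card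

/-- `alohaProb P k s c = P(S_k = s, C_k = c)` under the uniform distribution on
`Fin k → Fin P` (so the probability of an event is its cardinality divided by `P ^ k`).
The counts are compared with the integers `s, c`, so the probability is `0` whenever
`s` or `c` is negative. -/
noncomputable def alohaProb (P k : ℕ) (s c : ℤ) : ℝ :=
  ((Finset.univ.filter (fun ω : Fin k → Fin P =>
      (numSuccess P k ω : ℤ) = s ∧ (numCollision P k ω : ℤ) = c)).card : ℝ) / (P : ℝ) ^ k

namespace AlohaAux

def mult (P n : ℕ) (ω : Fin n → Fin P) (p : Fin P) : ℕ :=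
  (Finset.univ.filter (fun i => ω i = p)).card

lemma mult_cons {P n : ℕ} (ω : Fin n → Fin P) (p₀ p : Fin P) :
    mult P (n+1) (Fin.cons p₀ ω) p = (if p₀ = p then 1 else 0) + mult P n ω p := by
  unfold mult
  rw [Finset.card_filter, Finset.card_filter, Fin.sum_univ_succ]
  simp [Fin.cons_zero, Fin.cons_succ]

lemma numSuccess_eq {P n : ℕ} (ω : Fin n → Fin P) :
    numSuccess P n ω = (Finset.univ.filter (fun p => mult P n ω p = 1)).card := rfl

lemma numCollision_eq {P n : ℕ} (ω : Fin n → Fin P) :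
    numCollision P n ω = (Finset.univ.filter (fun p => 2 ≤ mult P n ω p)).card := rfl

lemma cons_zero {P n : ℕ} (ω : Fin n → Fin P) (p₀ : Fin P) (h : mult P n ω p₀ = 0) :
    numSuccess P (n+1) (Fin.cons p₀ ω) = numSuccess P n ω + 1 ∧
    numCollision P (n+1) (Fin.cons p₀ ω) = numCollision P n ω := by
  constructor
  · rw [numSuccess_eq, numSuccess_eq, Finset.card_filter, Finset.card_filter]
    have h1 : ∀ p : Fin P, (if mult P (n+1) (Fin.cons p₀ ω) p = 1 then 1 else 0)
        = (if mult P n ω p = 1 then 1 else 0) + (if p₀ = p then 1 else 0) := by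
      intro p
      rw [mult_cons]
      by_cases hp : p₀ = p
      · subst hp; simp [h]
      · simp [hp]
    rw [Finset.sum_congr rfl (fun p _ => h1 p), Finset.sum_add_distrib]
    simp
  · rw [numCollision_eq, numCollision_eq, Finset.card_filter, Finset.card_filter]
    refine Finset.sum_congr rfl (fun p _ => ?_)
    rw [mult_cons]
    by_cases hp : p₀ = p
    · subst hp; simp [h]
    · simp [hp]

lemma cons_one {P n : ℕ} (ω : Fin n → Fin P) (p₀ : Fin P) (h : mult P n ω p₀ = 1) :
    numSuccess P (n+1) (Fin.cons p₀ ω) + 1 = numSuccess P n ω ∧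
    numCollision P (n+1) (Fin.cons p₀ ω) = numCollision P n ω + 1 := by
  constructor
  · rw [numSuccess_eq, numSuccess_eq, Finset.card_filter, Finset.card_filter]
    have h1 : ∀ p : Fin P, (if mult P n ω p = 1 then 1 else 0)
        = (if mult P (n+1) (Fin.cons p₀ ω) p = 1 then 1 else 0) + (if p₀ = p then 1 else 0) := by
      intro p
      rw [mult_cons]
      by_cases hp : p₀ = p
      · subst hp; simp [h]
      · simp [hp]
    rw [Finset.sum_congr rfl (fun p _ => h1 p), Finset.sum_add_distrib]
    simp
  · rw [numCollision_eq, numCollision_eq, Finset.card_filter, Finset.card_filter]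
    have h1 : ∀ p : Fin P, (if 2 ≤ mult P (n+1) (Fin.cons p₀ ω) p then 1 else 0)
        = (if 2 ≤ mult P n ω p then 1 else 0) + (if p₀ = p then 1 else 0) := by
      intro p
      rw [mult_cons]
      by_cases hp : p₀ = p
      · subst hp; simp [h]
      · simp [hp]
    rw [Finset.sum_congr rfl (fun p _ => h1 p), Finset.sum_add_distrib]
    simp

lemma cons_ge_two {P n : ℕ} (ω : Fin n → Fin P) (p₀ : Fin P) (h : 2 ≤ mult P n ω p₀) :
    numSuccess P (n+1) (Fin.cons p₀ ω) = numSuccess P n ω ∧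
    numCollision P (n+1) (Fin.cons p₀ ω) = numCollision P n ω := by
  constructor
  · rw [numSuccess_eq, numSuccess_eq, Finset.card_filter, Finset.card_filter]
    refine Finset.sum_congr rfl (fun p _ => ?_)
    rw [mult_cons]
    by_cases hp : p₀ = p
    · subst hp; split_ifs <;> omega
    · simp [hp]
  · rw [numCollision_eq, numCollision_eq, Finset.card_filter, Finset.card_filter]
    refine Finset.sum_congr rfl (fun p _ => ?_)
    rw [mult_cons]
    by_cases hp : p₀ = p
    · subst hp; split_ifs <;> omega
    · simp [hp]

lemma partition_card {P n : ℕ} (ω : Fin n → Fin P) :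
    (Finset.univ.filter (fun p => mult P n ω p = 0)).card + numSuccess P n ω
      + numCollision P n ω = P := by
  rw [numSuccess_eq, numCollision_eq, Finset.card_filter, Finset.card_filter, Finset.card_filter]
  rw [← Finset.sum_add_distrib, ← Finset.sum_add_distrib]
  have h1 : ∀ p : Fin P, ((if mult P n ω p = 0 then 1 else 0) + (if mult P n ω p = 1 then 1 else 0))
      + (if 2 ≤ mult P n ω p then 1 else 0) = 1 := by
    intro p; split_ifs <;> omega
  rw [Finset.sum_congr rfl (fun p _ => h1 p)]
  simp

lemma inner_count {P n : ℕ} (ω : Fin n → Fin P) (s c : ℤ) :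
    ((Finset.univ.filter (fun p₀ : Fin P =>
       (numSuccess P (n+1) (Fin.cons p₀ ω) : ℤ) = s ∧
       (numCollision P (n+1) (Fin.cons p₀ ω) : ℤ) = c)).card : ℝ)
    = (if ((numSuccess P n ω : ℤ) = s - 1 ∧ (numCollision P n ω : ℤ) = c)
         then ((P : ℝ) - (s : ℝ) + 1 - (c : ℝ)) else 0)
    + (if ((numSuccess P n ω : ℤ) = s ∧ (numCollision P n ω : ℤ) = c) then ((c : ℝ)) else 0)
    + (if ((numSuccess P n ω : ℤ) = s + 1 ∧ (numCollision P n ω : ℤ) = c - 1)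
         then ((s : ℝ) + 1) else 0) := by
  have hnat : (Finset.univ.filter (fun p₀ : Fin P =>
       (numSuccess P (n+1) (Fin.cons p₀ ω) : ℤ) = s ∧
       (numCollision P (n+1) (Fin.cons p₀ ω) : ℤ) = c)).card
      = (if ((numSuccess P n ω : ℤ) = s - 1 ∧ (numCollision P n ω : ℤ) = c)
           then (Finset.univ.filter (fun p => mult P n ω p = 0)).card else 0)
      + (if ((numSuccess P n ω : ℤ) = s ∧ (numCollision P n ω : ℤ) = c)
           then numCollision P n ω else 0)
      + (if ((numSuccess P n ω : ℤ) = s + 1 ∧ (numCollision P n ω : ℤ) = c - 1)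
           then numSuccess P n ω else 0) := by
    rw [Finset.card_filter]
    have hpt : ∀ p₀ : Fin P,
        (if ((numSuccess P (n+1) (Fin.cons p₀ ω) : ℤ) = s ∧
             (numCollision P (n+1) (Fin.cons p₀ ω) : ℤ) = c) then 1 else 0)
        = (if ((numSuccess P n ω : ℤ) = s - 1 ∧ (numCollision P n ω : ℤ) = c)
             then (if mult P n ω p₀ = 0 then 1 else 0) else 0)
        + (if ((numSuccess P n ω : ℤ) = s ∧ (numCollision P n ω : ℤ) = c)
             then (if 2 ≤ mult P n ω p₀ then 1 else 0) else 0)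
        + (if ((numSuccess P n ω : ℤ) = s + 1 ∧ (numCollision P n ω : ℤ) = c - 1)
             then (if mult P n ω p₀ = 1 then 1 else 0) else 0) := by
      intro p₀
      have h3 : mult P n ω p₀ = 0 ∨ mult P n ω p₀ = 1 ∨ 2 ≤ mult P n ω p₀ := by omega
      rcases h3 with hm | hm | hm
      · obtain ⟨hS, hC⟩ := cons_zero ω p₀ hm
        rw [hS, hC]; split_ifs <;> omega
      · obtain ⟨hS, hC⟩ := cons_one ω p₀ hm
        rw [hC]; split_ifs <;> omega
      · obtain ⟨hS, hC⟩ := cons_ge_two ω p₀ hm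
        rw [hS, hC]; split_ifs <;> omega
    rw [Finset.sum_congr rfl (fun p₀ _ => hpt p₀), Finset.sum_add_distrib,
      Finset.sum_add_distrib]
    have e1 : (∑ p : Fin P, if ((numSuccess P n ω : ℤ) = s - 1 ∧ (numCollision P n ω : ℤ) = c)
          then (if mult P n ω p = 0 then 1 else 0) else 0)
        = (if ((numSuccess P n ω : ℤ) = s - 1 ∧ (numCollision P n ω : ℤ) = c)
           then (Finset.univ.filter (fun p => mult P n ω p = 0)).card else 0) := by
      by_cases h : ((numSuccess P n ω : ℤ) = s - 1 ∧ (numCollision P n ω : ℤ) = c)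
      · simp only [if_pos h]; rw [Finset.card_filter]
      · simp only [if_neg h, Finset.sum_const_zero]
    have e2 : (∑ p : Fin P, if ((numSuccess P n ω : ℤ) = s ∧ (numCollision P n ω : ℤ) = c)
          then (if 2 ≤ mult P n ω p then 1 else 0) else 0)
        = (if ((numSuccess P n ω : ℤ) = s ∧ (numCollision P n ω : ℤ) = c)
           then numCollision P n ω else 0) := by
      by_cases h : ((numSuccess P n ω : ℤ) = s ∧ (numCollision P n ω : ℤ) = c)
      · simp only [if_pos h]; rw [numCollision_eq, Finset.card_filter]
      · simp only [if_neg h, Finset.sum_const_zero]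
    have e3 : (∑ p : Fin P, if ((numSuccess P n ω : ℤ) = s + 1 ∧ (numCollision P n ω : ℤ) = c - 1)
          then (if mult P n ω p = 1 then 1 else 0) else 0)
        = (if ((numSuccess P n ω : ℤ) = s + 1 ∧ (numCollision P n ω : ℤ) = c - 1)
           then numSuccess P n ω else 0) := by
      by_cases h : ((numSuccess P n ω : ℤ) = s + 1 ∧ (numCollision P n ω : ℤ) = c - 1)
      · simp only [if_pos h]; rw [numSuccess_eq, Finset.card_filter]
      · simp only [if_neg h, Finset.sum_const_zero]
    rw [e1, e2, e3]
  rw [hnat]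
  have hpart := partition_card ω
  push_cast
  by_cases h1 : ((numSuccess P n ω : ℤ) = s - 1 ∧ (numCollision P n ω : ℤ) = c)
  · have h2 : ¬ ((numSuccess P n ω : ℤ) = s ∧ (numCollision P n ω : ℤ) = c) := by omega
    have h3 : ¬ ((numSuccess P n ω : ℤ) = s + 1 ∧ (numCollision P n ω : ℤ) = c - 1) := by omega
    simp only [if_pos h1, if_neg h2, if_neg h3]
    have he : (((Finset.univ.filter (fun p => mult P n ω p = 0)).card : ℤ))
        = (P : ℤ) - s + 1 - c := by omega
    have hr := congrArg (fun z : ℤ => (z : ℝ)) he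
    push_cast at hr
    linarith
  · by_cases h2 : ((numSuccess P n ω : ℤ) = s ∧ (numCollision P n ω : ℤ) = c)
    · have h3 : ¬ ((numSuccess P n ω : ℤ) = s + 1 ∧ (numCollision P n ω : ℤ) = c - 1) := by omega
      simp only [if_neg h1, if_pos h2, if_neg h3]
      have hr := congrArg (fun z : ℤ => (z : ℝ)) h2.2
      push_cast at hr
      linarith
    · by_cases h3 : ((numSuccess P n ω : ℤ) = s + 1 ∧ (numCollision P n ω : ℤ) = c - 1)
      · simp only [if_neg h1, if_neg h2, if_pos h3]
        have hr := congrArg (fun z : ℤ => (z : ℝ)) h3.1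
        push_cast at hr
        linarith
      · simp only [if_neg h1, if_neg h2, if_neg h3]
        try norm_num

lemma key (P n : ℕ) (s c : ℤ) :
    ((Finset.univ.filter (fun ω : Fin (n+1) → Fin P =>
        (numSuccess P (n+1) ω : ℤ) = s ∧ (numCollision P (n+1) ω : ℤ) = c)).card : ℝ)
    = ((P:ℝ) - (s:ℝ) + 1 - (c:ℝ)) * ((Finset.univ.filter (fun ω : Fin n → Fin P =>
        (numSuccess P n ω : ℤ) = s - 1 ∧ (numCollision P n ω : ℤ) = c)).card : ℝ)
    + (c:ℝ) * ((Finset.univ.filter (fun ω : Fin n → Fin P =>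
        (numSuccess P n ω : ℤ) = s ∧ (numCollision P n ω : ℤ) = c)).card : ℝ)
    + ((s:ℝ)+1) * ((Finset.univ.filter (fun ω : Fin n → Fin P =>
        (numSuccess P n ω : ℤ) = s + 1 ∧ (numCollision P n ω : ℤ) = c - 1)).card : ℝ) := by
  have hcard : (Finset.univ.filter (fun ω : Fin (n+1) → Fin P =>
        (numSuccess P (n+1) ω : ℤ) = s ∧ (numCollision P (n+1) ω : ℤ) = c)).card
      = ∑ ω' : Fin n → Fin P,
        (Finset.univ.filter (fun p₀ : Fin P =>
          (numSuccess P (n+1) (Fin.cons p₀ ω') : ℤ) = s ∧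
          (numCollision P (n+1) (Fin.cons p₀ ω') : ℤ) = c)).card := by
    rw [Finset.card_filter]
    rw [← Fintype.sum_equiv (Fin.consEquiv (fun _ : Fin (n+1) => Fin P))
      (fun x : Fin P × (Fin n → Fin P) =>
        if ((numSuccess P (n+1) (Fin.cons x.1 x.2) : ℤ) = s ∧
            (numCollision P (n+1) (Fin.cons x.1 x.2) : ℤ) = c) then 1 else 0)
      (fun ω => if ((numSuccess P (n+1) ω : ℤ) = s ∧ (numCollision P (n+1) ω : ℤ) = c)
        then 1 else 0)
      (fun x => rfl)]
    rw [Fintype.sum_prod_type, Finset.sum_comm]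
    exact Finset.sum_congr rfl (fun ω' _ => (Finset.card_filter _ _).symm)
  rw [hcard]
  push_cast
  rw [Finset.sum_congr rfl (fun ω' _ => inner_count ω' s c), Finset.sum_add_distrib,
    Finset.sum_add_distrib]
  have g1 : (∑ x : Fin n → Fin P, if ((numSuccess P n x : ℤ) = s - 1 ∧ (numCollision P n x : ℤ) = c)
        then ((P:ℝ) - (s:ℝ) + 1 - (c:ℝ)) else 0)
      = ((P:ℝ) - (s:ℝ) + 1 - (c:ℝ)) * ((Finset.univ.filter (fun ω : Fin n → Fin P =>
        (numSuccess P n ω : ℤ) = s - 1 ∧ (numCollision P n ω : ℤ) = c)).card : ℝ) := by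
    rw [← Finset.sum_filter, Finset.sum_const, nsmul_eq_mul, mul_comm]
  have g2 : (∑ x : Fin n → Fin P, if ((numSuccess P n x : ℤ) = s ∧ (numCollision P n x : ℤ) = c)
        then ((c:ℝ)) else 0)
      = (c:ℝ) * ((Finset.univ.filter (fun ω : Fin n → Fin P =>
        (numSuccess P n ω : ℤ) = s ∧ (numCollision P n ω : ℤ) = c)).card : ℝ) := by
    rw [← Finset.sum_filter, Finset.sum_const, nsmul_eq_mul, mul_comm]
  have g3 : (∑ x : Fin n → Fin P, if ((numSuccess P n x : ℤ) = s + 1 ∧ (numCollision P n x : ℤ) = c - 1)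
        then ((s:ℝ) + 1) else 0)
      = ((s:ℝ) + 1) * ((Finset.univ.filter (fun ω : Fin n → Fin P =>
        (numSuccess P n ω : ℤ) = s + 1 ∧ (numCollision P n ω : ℤ) = c - 1)).card : ℝ) := by
    rw [← Finset.sum_filter, Finset.sum_const, nsmul_eq_mul, mul_comm]
  rw [g1, g2, g3]

end AlohaAux

lemma aloha_alg (p q K1 K2 K3 N1 N2 N3 : ℝ) (hp : p ≠ 0) (hq : q ≠ 0) :
    (K1 * N1 + K2 * N2 + K3 * N3) / (q * p)
      = (K1 / p) * (N1 / q) + (K2 / p) * (N2 / q) + (K3 / p) * (N3 / q) := by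
  rw [div_mul_div_comm, div_mul_div_comm, div_mul_div_comm, ← add_div, ← add_div, mul_comm q p]

/-- In the Framed ALOHA model with `P ≥ 1` slots and `k ≥ 1` transmitters, the joint
pmf of the number of successful slots and collided slots satisfies the recursion
`P(S_k = s, C_k = c) = ((P − s + 1 − c)/P)·P(S_{k−1} = s − 1, C_{k−1} = c)
 + (c/P)·P(S_{k−1} = s, C_{k−1} = c) + ((s + 1)/P)·P(S_{k−1} = s + 1, C_{k−1} = c − 1)`
for all integers `s, c ≥ 0` (terms with a negative count index being `0`),
together with the initial condition `P(S_0 = 0, C_0 = 0) = 1`. -/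
theorem framedAloha_joint_pmf_recursion (P k : ℕ) (hP : 1 ≤ P) (hk : 1 ≤ k)
    (s c : ℤ) (hs : 0 ≤ s) (hc : 0 ≤ c) :
    alohaProb P k s c =
        (((P : ℝ) - (s : ℝ) + 1 - (c : ℝ)) / (P : ℝ)) * alohaProb P (k - 1) (s - 1) c
      + ((c : ℝ) / (P : ℝ)) * alohaProb P (k - 1) s c
      + (((s : ℝ) + 1) / (P : ℝ)) * alohaProb P (k - 1) (s + 1) (c - 1)
    ∧ alohaProb P 0 0 0 = 1 := by
  constructor
  · obtain ⟨n, rfl⟩ : ∃ n, k = n + 1 := ⟨k - 1, by omega⟩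
    simp only [Nat.add_sub_cancel]
    unfold alohaProb
    have hkey := AlohaAux.key P n s c
    have hP0 : (P : ℝ) ≠ 0 := Nat.cast_ne_zero.mpr (by omega)
    rw [hkey, pow_succ]
    exact aloha_alg (P : ℝ) ((P : ℝ) ^ n) _ _ _ _ _ _ hP0 (pow_ne_zero n hP0)
  · unfold alohaProb
    have h1 : (Finset.univ.filter (fun ω : Fin 0 → Fin P =>
        (numSuccess P 0 ω : ℤ) = 0 ∧ (numCollision P 0 ω : ℤ) = 0)) = Finset.univ := by
      refine Finset.filter_true_of_mem (fun ω _ => ?_)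
      constructor
      · simp [numSuccess]
      · simp [numCollision]
    rw [h1]
    simp
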